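/- arXiv:1704.06163 — 3 statements merged into one kernel-verified Lean document; each statement's English description precedes it below -/
import Mathlib

section
/- Let G be a connected simple undirected graph on N vertices with graph Laplacian L = D − A (D the diagonal degree matrix, A the adjacency matrix), with eigenvalues 0 = λ₁ < λ₂ ≤ ⋯ ≤ λ_N. Then λ_N ≥ (N/(N−1))·d_max, where d_max is the maximum degree of G. -/
/-!
Rayleigh quotient with the test vector `x = N • e_v - 1`, where `v` has maximal degree. Since
`L 1 = 0` and `L` is symmetric, `xᵀ L x = N² L_vv = N² d_max`, while `xᵀ x = N (N - 1)`; so the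
quotient is `(N / (N - 1)) d_max`, and the largest eigenvalue dominates every Rayleigh quotient.
-/
open Matrix
open scoped RealInnerProductSpace

namespace Matrix

variable {n R : Type*} [Fintype n] [DecidableEq n]

theorem dotProduct_smul_single_sub_one_self [CommRing R] (a : R) (v : n) :
    (a • Pi.single v 1 - 1) ⬝ᵥ (a • Pi.single v 1 - 1 : n → R) =
      a ^ 2 - 2 * a + Fintype.card n := by
  simp only [dotProduct_sub, sub_dotProduct, dotProduct_smul, smul_dotProduct, dotProduct_single,
    single_dotProduct, Pi.sub_apply, Pi.smul_apply, Pi.single_eq_same, smul_eq_mul, mul_one,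
    Pi.one_apply, one_dotProduct_one]
  ring

theorem IsSymm.dotProduct_mulVec_smul_single_sub_one [CommRing R] {L : Matrix n n R}
    (hL : L.IsSymm) (hL1 : L *ᵥ 1 = 0) (a : R) (v : n) :
    (a • Pi.single v 1 - 1) ⬝ᵥ (L *ᵥ (a • Pi.single v 1 - 1)) = a ^ 2 * L v v := by
  set x : n → R := a • Pi.single v 1 - 1
  have hLx : L *ᵥ x = a • L *ᵥ Pi.single v 1 := by
    rw [mulVec_sub, mulVec_smul, hL1, sub_zero]
  have hxL : x ᵥ* L = L *ᵥ x := by simpa only [hL.eq] using vecMul_transpose L x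
  rw [hLx, dotProduct_smul, dotProduct_mulVec, hxL, hLx, mulVec_single_one]
  simp [pow_two, mul_assoc]

theorem IsHermitian.inner_toEuclideanLin_self_eq_sum {A : Matrix n n ℝ} (hA : A.IsHermitian)
    (x : EuclideanSpace ℝ n) :
    ⟪x, toEuclideanLin A x⟫ = ∑ i, hA.eigenvalues i * ⟪hA.eigenvectorBasis i, x⟫ ^ 2 := by
  have hsymm : (toEuclideanLin A).IsSymmetric := isSymmetric_toEuclideanLin_iff.mpr hA
  rw [← hA.eigenvectorBasis.sum_inner_mul_inner]
  refine Finset.sum_congr rfl fun i _ => ?_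
  have heig : toEuclideanLin A (hA.eigenvectorBasis i) =
      hA.eigenvalues i • hA.eigenvectorBasis i := by
    simpa [toLpLin_apply] using congrArg (WithLp.toLp 2) (hA.mulVec_eigenvectorBasis i)
  rw [← hsymm, heig, real_inner_smul_left, real_inner_comm x]
  ring

theorem IsHermitian.exists_le_eigenvalues_of_mul_dotProduct_le {A : Matrix n n ℝ}
    (hA : A.IsHermitian) {x : n → ℝ} (hx : x ≠ 0) {c : ℝ}
    (hc : c * (x ⬝ᵥ x) ≤ x ⬝ᵥ (A *ᵥ x)) : ∃ i, c ≤ hA.eigenvalues i := by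
  have : Nonempty n := let ⟨j, _⟩ := Function.ne_iff.mp hx; ⟨j⟩
  obtain ⟨i, hi⟩ := Finite.exists_max hA.eigenvalues
  set y : EuclideanSpace ℝ n := WithLp.toLp 2 x
  have hy : ‖y‖ ^ 2 = x ⬝ᵥ x := by
    rw [← real_inner_self_eq_norm_sq, EuclideanSpace.inner_toLp_toLp, star_trivial]
  have hAy : ⟪y, toEuclideanLin A y⟫ = x ⬝ᵥ (A *ᵥ x) := by
    rw [toLpLin_apply, EuclideanSpace.inner_toLp_toLp, star_trivial, dotProduct_comm]
  have hy0 : 0 < ‖y‖ ^ 2 := by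
    have : y ≠ 0 := fun h => hx (by simpa [y] using h)
    positivity
  refine ⟨i, le_of_mul_le_mul_right ?_ hy0⟩
  calc c * ‖y‖ ^ 2 ≤ ⟪y, toEuclideanLin A y⟫ := by rwa [hy, hAy]
    _ = ∑ j, hA.eigenvalues j * ⟪hA.eigenvectorBasis j, y⟫ ^ 2 :=
        hA.inner_toEuclideanLin_self_eq_sum y
    _ ≤ ∑ j, hA.eigenvalues i * ⟪hA.eigenvectorBasis j, y⟫ ^ 2 :=
        Finset.sum_le_sum fun j _ => by gcongr; exact hi j
    _ = hA.eigenvalues i * ‖y‖ ^ 2 := by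
        rw [← Finset.mul_sum, hA.eigenvectorBasis.sum_sq_inner_right]

end Matrix

theorem SimpleGraph.lapMatrix_apply_self {V R : Type*} [Fintype V] [DecidableEq V]
    (G : SimpleGraph V) [DecidableRel G.Adj] [AddGroupWithOne R] (v : V) :
    G.lapMatrix R v v = G.degree v := by
  simp [lapMatrix, degMatrix]

theorem stmt8_general {N : ℕ} (hN : 2 ≤ N) (G : SimpleGraph (Fin N)) [DecidableRel G.Adj]
    (hH : (G.lapMatrix ℝ).IsHermitian) :
    ∃ i : Fin N, ((N : ℝ) / ((N : ℝ) - 1)) * ((Finset.univ.sup (fun v => G.degree v) : ℕ) : ℝ)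
      ≤ hH.eigenvalues i := by
  obtain ⟨v, -, hv⟩ := Finset.exists_mem_eq_sup Finset.univ
    (Finset.univ_nonempty_iff.2 ⟨⟨0, by omega⟩⟩) fun v => G.degree v
  have hN1 : (N : ℝ) - 1 ≠ 0 := by
    have : (2 : ℝ) ≤ N := by exact_mod_cast hN
    linarith
  set x : Fin N → ℝ := (N : ℝ) • Pi.single v 1 - 1
  have hx : x ≠ 0 := fun h => hN1 (by simpa [x, sub_eq_zero] using congrFun h v)
  refine hH.exists_le_eigenvalues_of_mul_dotProduct_le hx (le_of_eq ?_)
  rw [(G.isSymm_lapMatrix ℝ).dotProduct_mulVec_smul_single_sub_one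
      G.lapMatrix_mulVec_const_eq_zero,
    dotProduct_smul_single_sub_one_self, G.lapMatrix_apply_self, hv, Fintype.card_fin]
  field_simp
  ring

/-- Fiedler's lower bound: for a connected simple graph `G` on `N` vertices, the largest
eigenvalue of the Laplacian `L = D − A` satisfies `λ_N ≥ (N/(N−1))·d_max`; equivalently,
some eigenvalue is at least `(N/(N−1))·d_max`. -/
theorem stmt8 {N : ℕ} (hN : 2 ≤ N) (G : SimpleGraph (Fin N)) [DecidableRel G.Adj]
    (hconn : G.Connected) (hH : (G.lapMatrix ℝ).IsHermitian) :
    ∃ i : Fin N, ((N : ℝ) / ((N : ℝ) - 1)) * ((Finset.univ.sup (fun v => G.degree v) : ℕ) : ℝ)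
      ≤ hH.eigenvalues i :=
  stmt8_general hN G hH
end

section
/- Let φ : ℝⁿ → ℝ₊ be a density in the cone C_{a,p} = { φ > 0 : φ(z)/φ(z̄) ≤ exp(a·‖z − z̄‖_p) for all z, z̄ }, and let ψ : ℝⁿ → ℝ₊ be any probability density. Then the convolution φ * ψ also belongs to C_{a,p}. -/
open MeasureTheory

/-- If `φ : ℝⁿ → ℝ₊` is a positive density in the cone
`C_{a,p} = {φ > 0 : φ(z) ≤ exp(a ‖z−z̄‖_p) φ(z̄)}` and `ψ ≥ 0` is any probability density,
then the convolution `φ * ψ` is again a positive density in `C_{a,p}`. -/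
theorem stmt15 {n : ℕ} (p : ENNReal) [Fact (1 ≤ p)] (a : ℝ)
    (nrm : (Fin n → ℝ) → ℝ) (hnrm : ∀ v, nrm v = ‖(WithLp.equiv p (Fin n → ℝ)).symm v‖)
    (φ ψ : (Fin n → ℝ) → ℝ) (hφpos : ∀ z, 0 < φ z)
    (hφ : ∀ z z', φ z ≤ Real.exp (a * nrm (z - z')) * φ z')
    (hφm : Measurable φ) (hψm : Measurable ψ) (hψ0 : ∀ y, 0 ≤ ψ y)
    (hψ1 : (∫ y, ψ y) = 1)
    (hint : ∀ z, Integrable (fun y => φ (z - y) * ψ y)) :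
    (∀ z, 0 < ∫ y, φ (z - y) * ψ y) ∧
    (∀ z z', (∫ y, φ (z - y) * ψ y)
      ≤ Real.exp (a * nrm (z - z')) * ∫ y, φ (z' - y) * ψ y) := by
  constructor
  · intro z
    have hnn : 0 ≤ ∫ y, φ (z - y) * ψ y :=
      integral_nonneg fun y => mul_nonneg (hφpos _).le (hψ0 y)
    rcases hnn.lt_or_eq with h | h
    · exact h
    · exfalso
      have h0 : (fun y => φ (z - y) * ψ y) =ᵐ[volume] 0 := by
        rw [← integral_eq_zero_iff_of_nonneg (fun y => mul_nonneg (hφpos _).le (hψ0 y)) (hint z)]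
        exact h.symm
      have hψ0' : ψ =ᵐ[volume] 0 := by
        filter_upwards [h0] with y hy
        have := (hφpos (z - y)).ne'
        simpa [mul_eq_zero, this] using hy
      rw [integral_congr_ae hψ0'] at hψ1; simp at hψ1
  · intro z z'
    rw [← integral_const_mul]
    refine integral_mono (hint z) ((hint z').const_mul _) fun y => ?_
    have h := mul_le_mul_of_nonneg_right (hφ (z - y) (z' - y)) (hψ0 y)
    have hsub : z - y - (z' - y) = z - z' := by ring
    rw [hsub] at h
    simpa [mul_assoc] using h
end

section
/- Let g : ℝ/ℤ → ℝ/ℤ be a map and O = {z̄(0), …, z̄(p−1)} a periodic orbit of period p with g(z̄(k)) = z̄(k+1 mod p), such that |(g^p)'| ≤ λ < 1 holds in the sense that d(g(x), g(y)) ≤ λ^{1/p} d(x,y) whenever x, y ∈ ⋃_k B(z̄(k), r). If x_{t+1} = g(x_t) + ξ_t with |ξ_t| ≤ ξ ≤ (1 − λ^{1/p})·r and x_0 ∈ B(z̄(k₀), r) for some k₀, then for all t ≥ 0, d(x_t, z̄(k₀ + t mod p)) ≤ λ^{t/p}·r + ξ/(1 − λ^{1/p}). -/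
/-!
Write `μ = λ^{1/p}` and `e_t = d(x_t, z̄(k₀ + t))`. As long as `e_t ≤ r`, both `x_t` and
`z̄(k₀ + t)` lie in the region where `g` contracts, so `e_{t+1} ≤ ξ + μ e_t` by the triangle
inequality through `g(x_t)`. The solution `μ^t r + ξ(1 + μ + ⋯ + μ^{t-1})` of this recursion
never exceeds `r` because `ξ ≤ (1 - μ) r`, so the contraction stays available at every step,
and the geometric sum is at most `1 / (1 - μ)`.
-/

open Finset

theorem pow_mul_add_mul_geom_sum_le {μ ξ r : ℝ} (hμ : 0 ≤ μ) (hξr : ξ ≤ (1 - μ) * r) (t : ℕ) :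
    μ ^ t * r + ξ * ∑ i ∈ range t, μ ^ i ≤ r := by
  have hsum : 0 ≤ ∑ i ∈ range t, μ ^ i := sum_nonneg fun i _ => pow_nonneg hμ i
  calc μ ^ t * r + ξ * ∑ i ∈ range t, μ ^ i
      ≤ μ ^ t * r + (1 - μ) * r * ∑ i ∈ range t, μ ^ i := by gcongr
    _ = r := by rw [mul_right_comm, mul_neg_geom_sum]; ring

theorem le_pow_mul_add_mul_geom_sum_of_step {μ ξ r : ℝ} {e : ℕ → ℝ} (hμ : 0 ≤ μ)
    (hξr : ξ ≤ (1 - μ) * r) (h0 : e 0 ≤ r) (hstep : ∀ t, e t ≤ r → e (t + 1) ≤ ξ + μ * e t)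
    (t : ℕ) : e t ≤ μ ^ t * r + ξ * ∑ i ∈ range t, μ ^ i := by
  induction t with
  | zero => simpa using h0
  | succ t ih =>
    calc e (t + 1) ≤ ξ + μ * e t := hstep t (ih.trans (pow_mul_add_mul_geom_sum_le hμ hξr t))
      _ ≤ ξ + μ * (μ ^ t * r + ξ * ∑ i ∈ range t, μ ^ i) := by gcongr
      _ = μ ^ (t + 1) * r + ξ * ∑ i ∈ range (t + 1), μ ^ i := by rw [geom_sum_succ]; ring

theorem dist_le_of_noisy_orbit {X : Type*} [PseudoMetricSpace X] {g : X → X} {z x : ℕ → X}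
    {μ ξ r : ℝ} (hμ : 0 ≤ μ) (hξr : ξ ≤ (1 - μ) * r) (hz : ∀ t, g (z t) = z (t + 1))
    (hcontr : ∀ t y, dist y (z t) ≤ r → dist (g y) (g (z t)) ≤ μ * dist y (z t))
    (hnoise : ∀ t, dist (x (t + 1)) (g (x t)) ≤ ξ) (hx0 : dist (x 0) (z 0) ≤ r) (t : ℕ) :
    dist (x t) (z t) ≤ μ ^ t * r + ξ * ∑ i ∈ range t, μ ^ i := by
  refine le_pow_mul_add_mul_geom_sum_of_step (e := fun t => dist (x t) (z t)) hμ hξr hx0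
    (fun t ht => ?_) t
  calc dist (x (t + 1)) (z (t + 1))
      ≤ dist (x (t + 1)) (g (x t)) + dist (g (x t)) (g (z t)) := by
        rw [← hz]; exact dist_triangle _ _ _
    _ ≤ ξ + μ * dist (x t) (z t) := add_le_add (hnoise t) (hcontr t _ ht)

theorem AddCircle.dist_add_coe_le_abs {T : ℝ} (y : AddCircle T) (s : ℝ) :
    dist (y + (s : AddCircle T)) y ≤ |s| := by
  rw [dist_eq_norm, add_sub_cancel_left, ← Real.norm_eq_abs]
  exact QuotientAddGroup.norm_mk_le_norm

theorem Real.rpow_div_natCast_eq_pow {a : ℝ} (ha : 0 ≤ a) (t p : ℕ) :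
    a ^ ((t : ℝ) / p) = (a ^ ((1 : ℝ) / p)) ^ t := by
  rw [← Real.rpow_natCast, ← Real.rpow_mul ha, one_div_mul_eq_div]

theorem stmt17_general (p : ℕ) (hp : 0 < p) (g : AddCircle (1:ℝ) → AddCircle (1:ℝ))
    (zbar : ZMod p → AddCircle (1:ℝ)) (horb : ∀ k, g (zbar k) = zbar (k + 1))
    (lam r ξ : ℝ) (hlam0 : 0 ≤ lam) (hlam1 : lam < 1)
    (hcontr : ∀ x y, x ∈ (⋃ k, Metric.closedBall (zbar k) r) →
      y ∈ (⋃ k, Metric.closedBall (zbar k) r) →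
      dist (g x) (g y) ≤ lam ^ ((1 : ℝ) / (p : ℝ)) * dist x y)
    (x : ℕ → AddCircle (1:ℝ)) (ξs : ℕ → ℝ)
    (hrec : ∀ t, x (t + 1) = g (x t) + ((ξs t : ℝ) : AddCircle (1:ℝ)))
    (hξs : ∀ t, |ξs t| ≤ ξ) (hξr : ξ ≤ (1 - lam ^ ((1 : ℝ) / (p : ℝ))) * r)
    (k₀ : ZMod p) (hx0 : dist (x 0) (zbar k₀) ≤ r) :
    ∀ t : ℕ, dist (x t) (zbar (k₀ + (t : ZMod p)))
      ≤ lam ^ ((t : ℝ) / (p : ℝ)) * r + ξ / (1 - lam ^ ((1 : ℝ) / (p : ℝ))) := by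
  set μ := lam ^ ((1 : ℝ) / (p : ℝ))
  have hμ0 : 0 ≤ μ := Real.rpow_nonneg hlam0 _
  have hr : 0 ≤ r := dist_nonneg.trans hx0
  have hbound := dist_le_of_noisy_orbit (z := fun t : ℕ => zbar (k₀ + t)) (x := x) hμ0 hξr
    (fun t => by simp only [horb, Nat.cast_succ, add_assoc])
    (fun t y hy => hcontr _ _ (Set.mem_iUnion.2 ⟨_, hy⟩)
      (Set.mem_iUnion.2 ⟨_, Metric.mem_closedBall_self hr⟩))
    (fun t => by rw [hrec]; exact (AddCircle.dist_add_coe_le_abs _ _).trans (hξs t))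
    (by simpa using hx0)
  intro t
  have hμ1 : μ < 1 := Real.rpow_lt_one hlam0 hlam1 (by positivity)
  have hgeom : ∑ i ∈ range t, μ ^ i ≤ 1 / (1 - μ) := by
    simpa using geom_sum_Ico_le_of_lt_one (m := 0) (n := t) hμ0 hμ1
  have hξ : ξ * ∑ i ∈ range t, μ ^ i ≤ ξ / (1 - μ) := by
    rw [← mul_one_div]; exact mul_le_mul_of_nonneg_left hgeom ((abs_nonneg _).trans (hξs 0))
  rw [Real.rpow_div_natCast_eq_pow hlam0]
  exact (hbound t).trans (by linarith)

/-- Noisy tracking of a hyperbolic periodic attractor: if `g` maps the periodic orbit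
`z̄(0),…,z̄(p−1)` cyclically, contracts distances by `λ^{1/p}` on the union of the `r`-balls
around the orbit, and `x_{t+1} = g(x_t) + ξ_t` with `|ξ_t| ≤ ξ ≤ (1 − λ^{1/p}) r` and
`x₀ ∈ B(z̄(k₀), r)`, then `d(x_t, z̄(k₀+t mod p)) ≤ λ^{t/p} r + ξ/(1 − λ^{1/p})`. -/
theorem stmt17 (p : ℕ) (hp : 0 < p) (g : AddCircle (1:ℝ) → AddCircle (1:ℝ))
    (zbar : ZMod p → AddCircle (1:ℝ)) (horb : ∀ k, g (zbar k) = zbar (k + 1))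
    (lam r ξ : ℝ) (hlam0 : 0 ≤ lam) (hlam1 : lam < 1) (hr : 0 < r)
    (hcontr : ∀ x y, x ∈ (⋃ k, Metric.closedBall (zbar k) r) →
      y ∈ (⋃ k, Metric.closedBall (zbar k) r) →
      dist (g x) (g y) ≤ lam ^ ((1 : ℝ) / (p : ℝ)) * dist x y)
    (x : ℕ → AddCircle (1:ℝ)) (ξs : ℕ → ℝ)
    (hrec : ∀ t, x (t + 1) = g (x t) + ((ξs t : ℝ) : AddCircle (1:ℝ)))
    (hξs : ∀ t, |ξs t| ≤ ξ) (hξr : ξ ≤ (1 - lam ^ ((1 : ℝ) / (p : ℝ))) * r)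
    (k₀ : ZMod p) (hx0 : dist (x 0) (zbar k₀) ≤ r) :
    ∀ t : ℕ, dist (x t) (zbar (k₀ + (t : ZMod p)))
      ≤ lam ^ ((t : ℝ) / (p : ℝ)) * r + ξ / (1 - lam ^ ((1 : ℝ) / (p : ℝ))) :=
  stmt17_general p hp g zbar horb lam r ξ hlam0 hlam1 hcontr x ξs hrec hξs hξr k₀ hx0
end
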